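/- If A is a hoop with least element 0 and B is any hoop, then the map σ: B → A with σ(1)=1 and σ(x)=0 for x≠1 is a product morphism, and the σ-product A ⋉_σ B is isomorphic to the ordinal sum B ⊕ A. -/
import Mathlib


/-- A hoop: a commutative monoid with a residuation-like arrow satisfying
(H1) `x → x = 1`, (H2) `(x·y) → z = x → (y → z)`, (H3) `x·(x→y) = y·(y→x)`. -/
class Hoop (α : Type*) extends CommMonoid α where
  arr : α → α → α
  arr_self : ∀ x : α, arr x x = 1
  arr_mul : ∀ x y z : α, arr (x * y) z = arr x (arr y z)
  divis : ∀ x y : α, x * arr x y = y * arr y x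

namespace Hoop

variable {α β γ : Type*} [Hoop α] [Hoop β] [Hoop γ]

/-- The induced order: `x ≤ y` iff `x → y = 1`. -/
def hle (x y : α) : Prop := arr x y = 1

/-- The induced meet: `x ∧ y = x·(x → y)`. -/
def hmeet (x y : α) : α := x * arr x y

/-- A product morphism of hoops: `f 1 = 1` and
`f x · f y = f (x·y) = f x ∧ f y = f (x ∧ y)`. -/
def IsProdMorphism {α β : Type*} [Hoop α] [Hoop β] (f : α → β) : Prop :=
  f 1 = 1 ∧ ∀ x y : α,
    f x * f y = f (x * y) ∧ f (x * y) = hmeet (f x) (f y) ∧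
      hmeet (f x) (f y) = f (hmeet x y)

/-- The underlying set of the `f`-product `A ⋉_f B`: pairs `(a, x)` with `a ≤ f x`. -/
def FSet {α β : Type*} [Hoop α] [Hoop β] (f : β → α) : Set (α × β) :=
  {p | hle p.1 (f p.2)}

/-- The multiplication of the `f`-product: componentwise. -/
def fmul (p q : α × β) : α × β := (p.1 * q.1, p.2 * q.2)

/-- The arrow of the `f`-product: `(a,x) → (b,y) = (f(x→y) ∧ (a→b), x→y)`. -/
def farr (f : β → α) (p q : α × β) : α × β :=
  (hmeet (f (arr p.2 q.2)) (arr p.1 q.1), arr p.2 q.2)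

open Classical in
/-- Multiplication of the ordinal sum `B ⊕ A` (universe `(B \ {1}) + A`). -/
noncomputable def osMul : ({x : β // x ≠ 1} ⊕ α) → ({x : β // x ≠ 1} ⊕ α) → ({x : β // x ≠ 1} ⊕ α)
  | Sum.inl x, Sum.inl y =>
      if h : x.val * y.val = 1 then Sum.inr 1 else Sum.inl ⟨x.val * y.val, h⟩
  | Sum.inl x, Sum.inr _ => Sum.inl x
  | Sum.inr _, Sum.inl x => Sum.inl x
  | Sum.inr a, Sum.inr b => Sum.inr (a * b)

open Classical in
/-- Arrow of the ordinal sum `B ⊕ A`. -/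
noncomputable def osArr : ({x : β // x ≠ 1} ⊕ α) → ({x : β // x ≠ 1} ⊕ α) → ({x : β // x ≠ 1} ⊕ α)
  | Sum.inl x, Sum.inl y =>
      if h : arr x.val y.val = 1 then Sum.inr 1 else Sum.inl ⟨arr x.val y.val, h⟩
  | Sum.inl _, Sum.inr _ => Sum.inr 1
  | Sum.inr _, Sum.inl x => Sum.inl x
  | Sum.inr a, Sum.inr b => Sum.inr (arr a b)


theorem arr_one_eq (x : α) : arr x 1 = 1 := by
  have key : ∀ w : α, arr (w * arr w 1) 1 = 1 := fun w => by
    rw [mul_comm, arr_mul, arr_self]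
  have hdiv : ∀ w : α, arr (1:α) w = w * arr w 1 := fun w => by
    have h := divis (1:α) w; rwa [one_mul] at h
  have hfix : arr (1:α) (arr x 1) = arr x 1 := by rw [← arr_mul, one_mul]
  have h2 : arr x 1 * arr (arr x 1) 1 = arr x 1 := by rw [← hdiv, hfix]
  have hu : arr (arr x 1) 1 = 1 := by
    calc arr (arr x 1) 1 = arr (arr x 1 * arr (arr x 1) 1) 1 := by rw [h2]
      _ = 1 := key _
  calc arr x 1 = arr x (arr (arr x 1) 1) := by rw [hu]
    _ = arr (x * arr x 1) 1 := (arr_mul _ _ _).symm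
    _ = 1 := key x

theorem one_arr_eq (x : α) : arr 1 x = x := by
  have h := divis (1:α) x
  rwa [one_mul, arr_one_eq, mul_one] at h

theorem hle_antisymm' {x y : α} (h1 : arr x y = 1) (h2 : arr y x = 1) : x = y := by
  have h := divis x y
  rwa [h1, h2, mul_one, mul_one] at h

theorem mul_arr_snd (x y : α) : arr (x * y) y = 1 := by
  rw [arr_mul, arr_self, arr_one_eq]

theorem hmeet_arr_fst (x y : α) : arr (x * arr x y) x = 1 := by
  rw [mul_comm, arr_mul, arr_self, arr_one_eq]

theorem mul_ne_one {x y : α} (hy : y ≠ 1) : x * y ≠ 1 := fun h => by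
  have := mul_arr_snd x y
  rw [h, one_arr_eq] at this
  exact hy this

theorem hmeet_ne_one {x y : α} (hx : x ≠ 1) : x * arr x y ≠ 1 := fun h => by
  have := hmeet_arr_fst x y
  rw [h, one_arr_eq] at this
  exact hx this

open Classical in
/-- If `A` has a least element `0`, the map `σ : B → A` with `σ 1 = 1` and
`σ x = 0` otherwise is a product morphism, and `A ⋉_σ B` is isomorphic to the
ordinal sum `B ⊕ A`. -/
theorem fprod_sigma_eq_ordinalSum (z : α) (hz : ∀ a : α, hle z a) :
    IsProdMorphism (fun x : β => if x = 1 then (1 : α) else z) ∧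
    ∃ Φ : ↥(FSet (fun x : β => if x = 1 then (1 : α) else z)) ≃ ({x : β // x ≠ 1} ⊕ α),
      (∀ (p q : ↥(FSet (fun x : β => if x = 1 then (1 : α) else z)))
          (h : fmul p.val q.val ∈ FSet (fun x : β => if x = 1 then (1 : α) else z)),
        Φ ⟨fmul p.val q.val, h⟩ = osMul (Φ p) (Φ q)) ∧
      (∀ (p q : ↥(FSet (fun x : β => if x = 1 then (1 : α) else z)))
          (h : farr (fun x : β => if x = 1 then (1 : α) else z) p.val q.val
                ∈ FSet (fun x : β => if x = 1 then (1 : α) else z)),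
        Φ ⟨farr (fun x : β => if x = 1 then (1 : α) else z) p.val q.val, h⟩
          = osArr (Φ p) (Φ q)) ∧
      (∀ h : (((1 : α), (1 : β)) : α × β) ∈ FSet (fun x : β => if x = 1 then (1 : α) else z),
        Φ ⟨((1 : α), (1 : β)), h⟩ = Sum.inr 1) := by
  classical
  set f : β → α := fun x : β => if x = 1 then (1 : α) else z with hf
  have hzz : z * z = z :=
    hle_antisymm' (by rw [mul_arr_snd]) (hz (z * z))
  constructor
  · refine ⟨if_pos rfl, fun x y => ?_⟩
    by_cases hx : x = 1 <;> by_cases hy : y = 1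
    · subst hx; subst hy
      simp [hf, hmeet, one_arr_eq]
    · subst hx
      simp [hf, hmeet, one_arr_eq, hy]
    · subst hy
      simp [hf, hmeet, arr_one_eq, hx]
    · have hxy : x * y ≠ 1 := mul_ne_one hy
      have hm : x * arr x y ≠ 1 := hmeet_ne_one hx
      simp [hf, hmeet, hx, hy, hxy, hm, arr_self, hzz]
  · have mem1 : ∀ a : α, ((a, (1:β)) ∈ FSet f) := fun a => by
      show hle a (f 1)
      simp [hle, hf, arr_one_eq]
    have memz : ∀ x : β, x ≠ 1 → ((z, x) ∈ FSet f) := fun x hx => by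
      show hle z (f x)
      simp [hle, hf, hx, arr_self]
    have memfst : ∀ (a : α) (x : β), x ≠ 1 → (a, x) ∈ FSet f → a = z := fun a x hx h => by
      have h1 : arr a z = 1 := by simpa [hle, hf, hx, FSet] using h
      exact hle_antisymm' h1 (hz a)
    refine ⟨⟨fun p => if h : p.val.2 = 1 then Sum.inr p.val.1 else Sum.inl ⟨p.val.2, h⟩,
      fun s => match s with
        | Sum.inl x => ⟨(z, x.val), memz x.val x.prop⟩
        | Sum.inr a => ⟨(a, 1), mem1 a⟩,
      ?_, ?_⟩, ?_, ?_, ?_⟩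
    · rintro ⟨⟨a, x⟩, hp⟩
      by_cases hx : x = 1
      · subst hx; simp
      · simp only [dif_neg hx]
        exact Subtype.ext (Prod.ext (memfst a x hx hp).symm rfl)
    · rintro (x | a)
      · simp [x.prop]
      · simp
    · rintro ⟨⟨a, x⟩, hp⟩ ⟨⟨b, y⟩, hq⟩ h
      simp only [Equiv.coe_fn_mk]
      by_cases hx : x = 1 <;> by_cases hy : y = 1
      · subst hx; subst hy
        simp [fmul, osMul]
      · subst hx
        have hb : b = z := memfst b y hy hq
        simp [fmul, osMul, hy]
      · subst hy
        have ha : a = z := memfst a x hx hp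
        simp [fmul, osMul, hx]
      · have hxy : x * y ≠ 1 := mul_ne_one hy
        simp [fmul, osMul, hx, hy, hxy]
    · rintro ⟨⟨a, x⟩, hp⟩ ⟨⟨b, y⟩, hq⟩ h
      simp only [Equiv.coe_fn_mk]
      by_cases hx : x = 1 <;> by_cases hy : y = 1
      · subst hx; subst hy
        simp [farr, osArr, hf, hmeet, arr_self, one_arr_eq]
      · subst hx
        have harr : arr (1:β) y = y := one_arr_eq y
        simp [farr, osArr, harr, hy]
      · subst hy
        have ha : a = z := memfst a x hx hp
        have hab : arr a b = 1 := ha ▸ hz b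
        simp [farr, osArr, hf, hmeet, arr_one_eq, one_arr_eq, hab, hx]
      · have ha : a = z := memfst a x hx hp
        have hab : arr a b = 1 := ha ▸ hz b
        by_cases hxy : arr x y = 1
        · simp [farr, osArr, hf, hmeet, hxy, one_arr_eq, hab, hx, hy]
        · simp [farr, osArr, hf, hmeet, hxy, hab, hx, hy]
    · intro h
      simp


end Hoop
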